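/- arXiv:1705.02546 — 2 statements merged into one kernel-verified Lean document; each statement's English description precedes it below -/
import Mathlib

section
/- Let H = L²(μ) be a real Hilbert space for a σ-finite measure μ, let Ψ : H → (-∞, ∞] be proper l.s.c. convex, and suppose Ψ satisfies the submodularity inequality Ψ(W¹ ∨ W²) + Ψ(W¹ ∧ W²) ≤ Ψ(W¹) + Ψ(W²) for all W¹, W² ∈ D(Ψ), where ∨, ∧ are pointwise max/min. Then for all [U¹, U*¹], [U², U*²] ∈ ∂Ψ, one has (U*¹ - U*², [U¹ - U²]⁺)_H ≥ 0, where [w]⁺ := max(w, 0) pointwise. -/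
noncomputable section
open MeasureTheory Filter Topology Set Metric
open scoped RealInnerProductSpace ENNReal NNReal

abbrev Euc (n : ℕ) := EuclideanSpace ℝ (Fin n)

def divg {n : ℕ} (ψ : Euc n → Euc n) (x : Euc n) : ℝ :=
  ∑ i, ⟪fderiv ℝ ψ x (EuclideanSpace.single i 1), EuclideanSpace.single i 1⟫

def IsTestVF {n : ℕ} (U : Set (Euc n)) (ψ : Euc n → Euc n) : Prop :=
  ContDiff ℝ (⊤ : ℕ∞) ψ ∧ HasCompactSupport ψ ∧ tsupport ψ ⊆ U

def HasWeakGradOn {n : ℕ} (u : Euc n → ℝ) (G : Euc n → Euc n) (U : Set (Euc n)) : Prop :=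
  ∀ ψ : Euc n → Euc n, IsTestVF U ψ →
    ∫ x in U, u x * divg ψ x = - ∫ x in U, ⟪G x, ψ x⟫

def TraceEq {n : ℕ} (Ω : Set (Euc n)) (μΓ : Measure (Euc n)) (nΓ : Euc n → Euc n)
    (u : Euc n → ℝ) (G : Euc n → Euc n) (uΓ : Euc n → ℝ) : Prop :=
  ∀ ψ : Euc n → Euc n, ContDiff ℝ (⊤ : ℕ∞) ψ → HasCompactSupport ψ →
    ∫ x, uΓ x * ⟪ψ x, nΓ x⟫ ∂μΓ =
      (∫ x in Ω, u x * divg ψ x) + ∫ x in Ω, ⟪G x, ψ x⟫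

def BVTraceEq {n : ℕ} (Ω : Set (Euc n)) (μΓ : Measure (Euc n)) (nΓ : Euc n → Euc n)
    (u : Euc n → ℝ) (ν : Measure (Euc n)) (σ : Euc n → Euc n) (uΓ : Euc n → ℝ) : Prop :=
  ∀ ψ : Euc n → Euc n, ContDiff ℝ (⊤ : ℕ∞) ψ → HasCompactSupport ψ →
    ∫ x, uΓ x * ⟪ψ x, nΓ x⟫ ∂μΓ =
      (∫ x in Ω, u x * divg ψ x) + ∫ x, ⟪σ x, ψ x⟫ ∂ν

def tangDiv {n : ℕ} (nΓ : Euc n → Euc n) (ψ : Euc n → Euc n) (x : Euc n) : ℝ :=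
  divg ψ x - ⟪fderiv ℝ ψ x (nΓ x), nΓ x⟫

def HasSurfGrad {n : ℕ} (Γ : Set (Euc n)) (μΓ : Measure (Euc n)) (nΓ : Euc n → Euc n)
    (u : Euc n → ℝ) (G : Euc n → Euc n) : Prop :=
  ∀ ψ : Euc n → Euc n, ContDiff ℝ (⊤ : ℕ∞) ψ → HasCompactSupport ψ →
    (∀ x ∈ Γ, ⟪ψ x, nΓ x⟫ = 0) →
    ∫ x, u x * tangDiv nΓ ψ x ∂μΓ = - ∫ x, ⟪G x, ψ x⟫ ∂μΓ

def GaussGreen {n : ℕ} (Ω : Set (Euc n)) (μΓ : Measure (Euc n)) (nΓ : Euc n → Euc n) : Prop :=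
  ∀ v : Euc n → ℝ, ContDiff ℝ (⊤ : ℕ∞) v → ∀ ψ : Euc n → Euc n, ContDiff ℝ (⊤ : ℕ∞) ψ → HasCompactSupport ψ →
    ∫ x, v x * ⟪ψ x, nΓ x⟫ ∂μΓ =
      (∫ x in Ω, v x * divg ψ x) + ∫ x in Ω, ⟪gradient v x, ψ x⟫

def PhiStar {n : ℕ} (Ω : Set (Euc n)) (μΓ : Measure (Euc n)) (nΓ : Euc n → Euc n) (ε : ℝ)
    (w wΓ : Euc n → ℝ) : ℝ≥0∞ :=
  (⨆ ψ : {ψ : Euc n → Euc n // ContDiff ℝ (⊤ : ℕ∞) ψ ∧ HasCompactSupport ψ ∧ ∀ x, ‖ψ x‖ ≤ 1},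
    ENNReal.ofReal ((∫ x in Ω, w x * divg ψ.1 x) - ∫ x, wΓ x * ⟪ψ.1 x, nΓ x⟫ ∂μΓ))
  + ⨆ ψ : {ψ : Euc n → Euc n // ContDiff ℝ (⊤ : ℕ∞) ψ ∧ HasCompactSupport ψ ∧
        ∀ x ∈ frontier Ω, ⟪ψ x, nΓ x⟫ = 0},
    ENNReal.ofReal (ε^2/2 * (2 * ∫ x, wΓ x * tangDiv nΓ ψ.1 x ∂μΓ - ∫ x, ‖ψ.1 x‖^2 ∂μΓ))

def PhiReg {n : ℕ} (Ω : Set (Euc n)) (μΓ : Measure (Euc n)) (nΓ : Euc n → Euc n) (ε : ℝ)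
    (f : Euc n → ℝ) (κ : ℝ) (w wΓ : Euc n → ℝ) : ℝ≥0∞ :=
  sInf {e : ℝ≥0∞ | ∃ G GΓ : Euc n → Euc n,
    HasWeakGradOn w G Ω ∧ MemLp w 2 (volume.restrict Ω) ∧ MemLp G 2 (volume.restrict Ω) ∧
    TraceEq Ω μΓ nΓ w G wΓ ∧
    HasSurfGrad (frontier Ω) μΓ nΓ wΓ GΓ ∧ MemLp wΓ 2 μΓ ∧ MemLp GΓ 2 μΓ ∧
    e = ENNReal.ofReal ((∫ x in Ω, (f (G x) + κ^2/2 * ‖G x‖^2)) +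
          ε^2/2 * ∫ x, ‖GΓ x‖^2 ∂μΓ)}

def HasLipschitzBoundary {d : ℕ} (Ω : Set (Euc (d+1))) : Prop :=
  ∀ x ∈ frontier Ω, ∃ (r : ℝ), 0 < r ∧ ∃ (e : Euc (d+1) ≃ₗᵢ[ℝ] Euc (d+1)) (c : Euc (d+1))
      (L : ℝ≥0) (f : Euc d → ℝ), LipschitzWith L f ∧
    Ω ∩ ball x r = {y | f (WithLp.toLp 2 (fun i : Fin d => e (y - c) i.castSucc)) < e (y - c) (Fin.last d)} ∩ ball x r

def ProperFn {X : Type*} (Ψ : X → EReal) : Prop := (∃ z, Ψ z ≠ ⊤) ∧ ∀ z, Ψ z ≠ ⊥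

def ConvexFn {X : Type*} [AddCommGroup X] [Module ℝ X] (Ψ : X → EReal) : Prop :=
  ∀ z w : X, ∀ t : ℝ, 0 ≤ t → t ≤ 1 →
    Ψ (t • z + (1 - t) • w) ≤ (t : EReal) * Ψ z + ((1 - t : ℝ) : EReal) * Ψ w

def InSubdiff {X : Type*} [NormedAddCommGroup X] [InnerProductSpace ℝ X]
    (Ψ : X → EReal) (z zs : X) : Prop :=
  Ψ z ≠ ⊤ ∧ ∀ w : X, ((⟪zs, w - z⟫ : ℝ) : EReal) + Ψ z ≤ Ψ w

def MoscoConv {X : Type*} [NormedAddCommGroup X] [InnerProductSpace ℝ X]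
    (Ψn : ℕ → X → EReal) (Ψ : X → EReal) : Prop :=
  (∀ (z : X) (zn : ℕ → X),
      (∀ y : X, Tendsto (fun k => (⟪zn k, y⟫ : ℝ)) atTop (𝓝 ⟪z, y⟫)) →
      Ψ z ≤ Filter.liminf (fun k => Ψn k (zn k)) atTop) ∧
  (∀ z : X, Ψ z ≠ ⊤ → ∃ zn : ℕ → X, Tendsto zn atTop (𝓝 z) ∧
      Tendsto (fun k => Ψn k (zn k)) atTop (𝓝 (Ψ z)))

def Euc.init {d : ℕ} (x : Euc (d+1)) : Euc d := WithLp.toLp 2 (fun i : Fin d => x i.castSucc)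

def Euc.snoc {d : ℕ} (ξ : Euc d) (t : ℝ) : Euc (d+1) := WithLp.toLp 2 (Fin.snoc (α := fun _ => ℝ) (WithLp.ofLp ξ) t)

def eTV {n : ℕ} (u : Euc n → ℝ) (U : Set (Euc n)) : ℝ≥0∞ :=
  ⨆ ψ : {ψ : Euc n → Euc n // IsTestVF U ψ ∧ ∀ x, ‖ψ x‖ ≤ 1},
    ENNReal.ofReal (∫ x in U, u x * divg ψ.1 x)

def IsBVRep {n : ℕ} (U : Set (Euc n)) (u : Euc n → ℝ) (ν : Measure (Euc n))
    (σ : Euc n → Euc n) : Prop :=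
  (∀ᵐ x ∂ν, ‖σ x‖ = 1) ∧
  ∀ ψ : Euc n → Euc n, IsTestVF U ψ →
    ∫ x in U, u x * divg ψ x = - ∫ x, ⟪σ x, ψ x⟫ ∂ν

/-- on H = L²(μ) (μ σ-finite), submodularity
`Ψ(W¹∨W²) + Ψ(W¹∧W²) ≤ Ψ(W¹) + Ψ(W²)` of a proper l.s.c. convex Ψ implies
T-monotonicity of ∂Ψ: `(U*¹ - U*², [U¹ - U²]⁺) ≥ 0`. -/
theorem stmt7 {α : Type*} [MeasurableSpace α] (μ : Measure α) [SigmaFinite μ]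
    (Ψ : Lp ℝ 2 μ → EReal) (hProper : ProperFn Ψ)
    (hLsc : LowerSemicontinuous Ψ) (hConv : ConvexFn Ψ)
    (hsub : ∀ W₁ W₂ : Lp ℝ 2 μ, Ψ W₁ ≠ ⊤ → Ψ W₂ ≠ ⊤ →
      Ψ (W₁ ⊔ W₂) + Ψ (W₁ ⊓ W₂) ≤ Ψ W₁ + Ψ W₂) :
    ∀ U₁ U₁s U₂ U₂s : Lp ℝ 2 μ, InSubdiff Ψ U₁ U₁s → InSubdiff Ψ U₂ U₂s →
      0 ≤ ⟪U₁s - U₂s, (U₁ - U₂) ⊔ 0⟫ := by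
  intro U₁ U₁s U₂ U₂s h₁ h₂
  obtain ⟨h₁t, h₁i⟩ := h₁
  obtain ⟨h₂t, h₂i⟩ := h₂
  set P : Lp ℝ 2 μ := (U₁ - U₂) ⊔ 0 with hP
  have hsup : U₁ ⊔ U₂ = U₂ + P := by
    rw [hP, add_sup, add_sub_cancel, add_zero, sup_comm]
  have hinf : U₁ ⊓ U₂ = U₁ - P := by
    rw [hP, sub_sup, sub_sub_cancel, sub_zero, inf_comm]
  -- real values
  obtain ⟨r₁, hr₁⟩ : ∃ r : ℝ, Ψ U₁ = (r : EReal) :=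
    ⟨(Ψ U₁).toReal, (EReal.coe_toReal h₁t (hProper.2 U₁)).symm⟩
  obtain ⟨r₂, hr₂⟩ : ∃ r : ℝ, Ψ U₂ = (r : EReal) :=
    ⟨(Ψ U₂).toReal, (EReal.coe_toReal h₂t (hProper.2 U₂)).symm⟩
  have hsub' := hsub U₁ U₂ h₁t h₂t
  have hsupt : Ψ (U₁ ⊔ U₂) ≠ ⊤ := by
    intro h
    rw [h, EReal.top_add_of_ne_bot (hProper.2 _), hr₁, hr₂, ← EReal.coe_add] at hsub'
    exact (EReal.coe_lt_top _).not_ge hsub'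
  have hinft : Ψ (U₁ ⊓ U₂) ≠ ⊤ := by
    intro h
    rw [h, EReal.add_top_of_ne_bot (hProper.2 _), hr₁, hr₂, ← EReal.coe_add] at hsub'
    exact (EReal.coe_lt_top _).not_ge hsub'
  obtain ⟨s₁, hs₁⟩ : ∃ r : ℝ, Ψ (U₁ ⊔ U₂) = (r : EReal) :=
    ⟨_, (EReal.coe_toReal hsupt (hProper.2 _)).symm⟩
  obtain ⟨s₂, hs₂⟩ : ∃ r : ℝ, Ψ (U₁ ⊓ U₂) = (r : EReal) :=
    ⟨_, (EReal.coe_toReal hinft (hProper.2 _)).symm⟩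
  have i₁ := h₁i (U₁ ⊓ U₂)
  have i₂ := h₂i (U₁ ⊔ U₂)
  rw [hinf] at i₁
  rw [hsup] at i₂
  have e₁ : U₁ - P - U₁ = -P := by abel
  have e₂ : U₂ + P - U₂ = P := by abel
  rw [e₁, hr₁, ← hinf, hs₂, inner_neg_right, ← EReal.coe_add, EReal.coe_le_coe_iff] at i₁
  rw [e₂, hr₂, ← hsup, hs₁, ← EReal.coe_add, EReal.coe_le_coe_iff] at i₂
  rw [hr₁, hr₂, hs₁, hs₂, ← EReal.coe_add, ← EReal.coe_add, EReal.coe_le_coe_iff] at hsub'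
  rw [inner_sub_left]
  linarith
end
end

section
/- Let Ω ⊂ ℝ^N (N > 1) be a bounded open set with Lipschitz boundary Γ. For g ∈ H^{1/2}(Γ) fixed, the functional u ↦ |D[u]_g^{ex}|(Ω̄) := ∫_Ω |Du| + ∫_Γ |u|_Γ - g| dΓ for u ∈ BV(Ω) (and := +∞ otherwise), where u|_Γ is the BV-trace, is convex and lower semicontinuous on L¹(Ω). -/
noncomputable section
open MeasureTheory Filter Topology Set Metric
open scoped RealInnerProductSpace ENNReal NNReal

section Stmt12Helpers

variable {n : ℕ}

lemma divg_continuous {ψ : Euc n → Euc n} (h : ContDiff ℝ (⊤ : ℕ∞) ψ) : Continuous (divg ψ) := by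
  refine continuous_finset_sum _ fun i _ => ?_
  exact ((h.continuous_fderiv (by simp)).clm_apply continuous_const).inner continuous_const

lemma divg_hcs {ψ : Euc n → Euc n} (hc : HasCompactSupport ψ) :
    HasCompactSupport (divg ψ) := by
  have h1 : HasCompactSupport (fderiv ℝ ψ) := HasCompactSupport.fderiv (𝕜 := ℝ) hc
  have := h1.comp_left
    (g := fun L : Euc n →L[ℝ] Euc n =>
      ∑ i, ⟪L (EuclideanSpace.single i 1), EuclideanSpace.single i 1⟫) (by simp)
  exact this

lemma divg_bound {ψ : Euc n → Euc n} (h : ContDiff ℝ (⊤ : ℕ∞) ψ) (hc : HasCompactSupport ψ) :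
    ∃ M : ℝ, ∀ x, ‖divg ψ x‖ ≤ M :=
  (divg_hcs hc).exists_bound_of_continuous (divg_continuous h)

lemma extInt {Ω : Set (Euc n)} (hΩm : MeasurableSet Ω) {R : ℝ} (hΩR : Ω ⊆ ball 0 R)
    {f u gex : Euc n → ℝ} (hfu : ∀ x ∈ Ω, f x = u x) (hfg : ∀ x ∉ Ω, f x = gex x)
    (hu : IntegrableOn u Ω) (hgex : IntegrableOn gex (ball 0 R)) :
    IntegrableOn f (ball 0 R) := by
  have h1 : IntegrableOn f Ω := hu.congr_fun (fun x hx => (hfu x hx).symm) hΩm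
  have h2 : IntegrableOn f (ball 0 R \ Ω) :=
    (hgex.mono_set diff_subset).congr_fun (fun x hx => (hfg x hx.2).symm)
      (measurableSet_ball.diff hΩm)
  have : IntegrableOn f (Ω ∪ (ball 0 R \ Ω)) := h1.union h2
  rwa [Set.union_diff_cancel hΩR] at this

lemma intMulDiv {R : ℝ} {f : Euc n → ℝ} (hf : IntegrableOn f (ball (0:Euc n) R))
    {ψ : Euc n → Euc n} (hψs : ContDiff ℝ (⊤ : ℕ∞) ψ) (hψc : HasCompactSupport ψ) :
    IntegrableOn (fun x => f x * divg ψ x) (ball (0:Euc n) R) := by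
  have := hf.bdd_mul ((divg_continuous hψs).aestronglyMeasurable) (Filter.Eventually.of_forall (divg_bound hψs hψc).choose_spec)
  simpa [mul_comm, IntegrableOn] using this

lemma ennreal_add_tsub_split {a b c d : ℝ≥0∞} : (a + b) - (c + d) ≤ (a - c) + (b - d) := by
  rw [tsub_le_iff_right]
  calc a + b ≤ ((a - c) + c) + ((b - d) + d) := add_le_add le_tsub_add le_tsub_add
    _ = (a - c) + (b - d) + (c + d) := by ring

lemma ennreal_mul_tsub_le {a b c : ℝ≥0∞} : a * b - a * c ≤ a * (b - c) := by
  rw [tsub_le_iff_right, ← mul_add]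
  exact mul_le_mul_right le_tsub_add a

end Stmt12Helpers

open scoped Classical in
/-- for fixed g ∈ H^{1/2}(Γ) (given through an H¹-extension `gex`), the
functional `u ↦ ∫_Ω |Du| + ∫_Γ |u|_Γ - g| dΓ` — realized, via the gluing identity
(Fact 4 of the paper), as the total variation over a ball B ⊃ Ω̄ of the extension of u
by gex minus the (constant) Dirichlet contribution on B \ Ω̄ — is convex and lower
semicontinuous on L¹(Ω). -/
theorem stmt12 {d : ℕ} (hd : 1 ≤ d) (Ω : Set (Euc (d+1))) (hΩo : IsOpen Ω)
    (hΩb : Bornology.IsBounded Ω) (hLip : HasLipschitzBoundary Ω)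
    (R : ℝ) (hR : closure Ω ⊆ ball (0 : Euc (d+1)) R)
    (gex : Euc (d+1) → ℝ) (Gg : Euc (d+1) → Euc (d+1))
    (hg : HasWeakGradOn gex Gg Set.univ)
    (hg2 : MemLp gex 2 (volume : Measure (Euc (d+1))))
    (hGg2 : MemLp Gg 2 (volume : Measure (Euc (d+1)))) :
    (∀ (u v : Euc (d+1) → ℝ), IntegrableOn u Ω → IntegrableOn v Ω →
      ∀ t : ℝ, 0 ≤ t → t ≤ 1 →
      (eTV (fun x => if x ∈ Ω then t * u x + (1-t) * v x else gex x) (ball 0 R)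
          - ENNReal.ofReal (∫ x in ball (0 : Euc (d+1)) R \ closure Ω, ‖Gg x‖))
        ≤ ENNReal.ofReal t *
            (eTV (fun x => if x ∈ Ω then u x else gex x) (ball 0 R)
              - ENNReal.ofReal (∫ x in ball (0 : Euc (d+1)) R \ closure Ω, ‖Gg x‖))
          + ENNReal.ofReal (1-t) *
            (eTV (fun x => if x ∈ Ω then v x else gex x) (ball 0 R)
              - ENNReal.ofReal (∫ x in ball (0 : Euc (d+1)) R \ closure Ω, ‖Gg x‖))) ∧
    (∀ (u : Euc (d+1) → ℝ) (uk : ℕ → Euc (d+1) → ℝ), IntegrableOn u Ω →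
      (∀ k, IntegrableOn (uk k) Ω) →
      Filter.Tendsto (fun k => ∫ x in Ω, |uk k x - u x|) Filter.atTop (𝓝 0) →
      (eTV (fun x => if x ∈ Ω then u x else gex x) (ball 0 R)
          - ENNReal.ofReal (∫ x in ball (0 : Euc (d+1)) R \ closure Ω, ‖Gg x‖))
        ≤ Filter.liminf (fun k =>
            eTV (fun x => if x ∈ Ω then uk k x else gex x) (ball 0 R)
              - ENNReal.ofReal (∫ x in ball (0 : Euc (d+1)) R \ closure Ω, ‖Gg x‖))
            Filter.atTop) := by
  classical
  set B : Set (Euc (d+1)) := ball 0 R with hB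
  set C : ℝ≥0∞ := ENNReal.ofReal (∫ x in B \ closure Ω, ‖Gg x‖) with hCdef
  have hΩm : MeasurableSet Ω := hΩo.measurableSet
  have hΩR : Ω ⊆ ball (0 : Euc (d+1)) R := subset_closure.trans hR
  haveI : IsFiniteMeasure (volume.restrict (ball (0:Euc (d+1)) R)) :=
    ⟨by rw [Measure.restrict_apply_univ]; exact measure_ball_lt_top⟩
  have hgexInt : IntegrableOn gex (ball (0:Euc (d+1)) R) :=
    (hg2.restrict _).integrable one_le_two
  have hExt : ∀ (w : Euc (d+1) → ℝ), IntegrableOn w Ω →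
      IntegrableOn (fun x => if x ∈ Ω then w x else gex x) (ball (0:Euc (d+1)) R) := by
    intro w hw
    exact extInt hΩm hΩR (fun x hx => if_pos hx) (fun x hx => if_neg hx) hw hgexInt
  constructor
  · -- convexity
    intro u v hu hv t ht0 ht1
    rw [tsub_le_iff_right]
    unfold eTV
    refine iSup_le fun ψ => ?_
    rw [← tsub_le_iff_right]
    obtain ⟨⟨hψs, hψc, hψsupp⟩, hψ1⟩ := ψ.2
    have hIu := intMulDiv (hExt u hu) hψs hψc
    have hIv := intMulDiv (hExt v hv) hψs hψc
    set a : ℝ := ∫ x in ball (0:Euc (d+1)) R, (if x ∈ Ω then u x else gex x) * divg ψ.1 x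
    set b : ℝ := ∫ x in ball (0:Euc (d+1)) R, (if x ∈ Ω then v x else gex x) * divg ψ.1 x
    have hfun : ∀ x, (if x ∈ Ω then t * u x + (1-t) * v x else gex x) * divg ψ.1 x
        = t * ((if x ∈ Ω then u x else gex x) * divg ψ.1 x)
          + (1-t) * ((if x ∈ Ω then v x else gex x) * divg ψ.1 x) := by
      intro x; by_cases hx : x ∈ Ω <;> simp [hx] <;> ring
    have hlin : (∫ x in ball (0:Euc (d+1)) R,
        (if x ∈ Ω then t * u x + (1-t) * v x else gex x) * divg ψ.1 x)
        = t * a + (1-t) * b := by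
      simp only [hfun]
      rw [integral_add (hIu.const_mul t) (hIv.const_mul (1-t)),
        integral_const_mul, integral_const_mul]
    have ht1' : (0:ℝ) ≤ 1 - t := by linarith
    have hC : ENNReal.ofReal t * C + ENNReal.ofReal (1-t) * C = C := by
      rw [← add_mul, ← ENNReal.ofReal_add ht0 ht1']
      norm_num
    have hau : ENNReal.ofReal a ≤ eTV (fun x => if x ∈ Ω then u x else gex x) (ball 0 R) := by
      unfold eTV
      exact le_iSup (fun ψ' : {ψ' : Euc (d+1) → Euc (d+1) //
        IsTestVF (ball 0 R) ψ' ∧ ∀ x, ‖ψ' x‖ ≤ 1} =>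
          ENNReal.ofReal (∫ x in ball (0:Euc (d+1)) R,
            (if x ∈ Ω then u x else gex x) * divg ψ'.1 x))
        ⟨ψ.1, ⟨⟨hψs, hψc, hψsupp⟩, hψ1⟩⟩
    have hbv : ENNReal.ofReal b ≤ eTV (fun x => if x ∈ Ω then v x else gex x) (ball 0 R) := by
      unfold eTV
      exact le_iSup (fun ψ' : {ψ' : Euc (d+1) → Euc (d+1) //
        IsTestVF (ball 0 R) ψ' ∧ ∀ x, ‖ψ' x‖ ≤ 1} =>
          ENNReal.ofReal (∫ x in ball (0:Euc (d+1)) R,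
            (if x ∈ Ω then v x else gex x) * divg ψ'.1 x))
        ⟨ψ.1, ⟨⟨hψs, hψc, hψsupp⟩, hψ1⟩⟩
    calc ENNReal.ofReal (∫ x in ball (0:Euc (d+1)) R,
          (if x ∈ Ω then t * u x + (1-t) * v x else gex x) * divg ψ.1 x) - C
        = ENNReal.ofReal (t * a + (1-t) * b) - C := by rw [hlin]
      _ ≤ (ENNReal.ofReal t * ENNReal.ofReal a + ENNReal.ofReal (1-t) * ENNReal.ofReal b)
            - (ENNReal.ofReal t * C + ENNReal.ofReal (1-t) * C) := by
          rw [hC]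
          refine tsub_le_tsub_right ?_ C
          calc ENNReal.ofReal (t * a + (1-t) * b)
              ≤ ENNReal.ofReal (t * a) + ENNReal.ofReal ((1-t) * b) := ENNReal.ofReal_add_le
            _ = _ := by rw [ENNReal.ofReal_mul ht0, ENNReal.ofReal_mul ht1']
      _ ≤ (ENNReal.ofReal t * ENNReal.ofReal a - ENNReal.ofReal t * C)
            + (ENNReal.ofReal (1-t) * ENNReal.ofReal b - ENNReal.ofReal (1-t) * C) :=
          ennreal_add_tsub_split
      _ ≤ ENNReal.ofReal t * (ENNReal.ofReal a - C)
            + ENNReal.ofReal (1-t) * (ENNReal.ofReal b - C) :=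
          add_le_add ennreal_mul_tsub_le ennreal_mul_tsub_le
      _ ≤ _ := add_le_add
            (mul_le_mul_right (tsub_le_tsub_right hau C) _)
            (mul_le_mul_right (tsub_le_tsub_right hbv C) _)
  · -- lower semicontinuity
    intro u uk hu huk hconv
    rw [tsub_le_iff_right]
    unfold eTV
    refine iSup_le fun ψ => ?_
    rw [← tsub_le_iff_right]
    obtain ⟨⟨hψs, hψc, hψsupp⟩, hψ1⟩ := ψ.2
    obtain ⟨M, hM⟩ := divg_bound hψs hψc
    have hIinf := intMulDiv (hExt u hu) hψs hψc
    have hIk : ∀ k, IntegrableOn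
        (fun x => (if x ∈ Ω then uk k x else gex x) * divg ψ.1 x) (ball (0:Euc (d+1)) R) :=
      fun k => intMulDiv (hExt (uk k) (huk k)) hψs hψc
    set I : ℕ → ℝ := fun k => ∫ x in ball (0:Euc (d+1)) R,
      (if x ∈ Ω then uk k x else gex x) * divg ψ.1 x with hIdef
    set J : ℝ := ∫ x in ball (0:Euc (d+1)) R,
      (if x ∈ Ω then u x else gex x) * divg ψ.1 x with hJdef
    have hdiffInt : ∀ k, IntegrableOn (fun x => (uk k x - u x) * divg ψ.1 x) Ω := by
      intro k
      have := ((huk k).sub hu).bdd_mul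
        ((divg_continuous hψs).aestronglyMeasurable) (Filter.Eventually.of_forall hM)
      simpa [mul_comm, IntegrableOn] using this
    have hdiff : ∀ k, I k - J = ∫ x in Ω, (uk k x - u x) * divg ψ.1 x := by
      intro k
      rw [hIdef, hJdef, ← integral_sub (hIk k) hIinf]
      have hpt : ∀ x, (if x ∈ Ω then uk k x else gex x) * divg ψ.1 x
          - (if x ∈ Ω then u x else gex x) * divg ψ.1 x
          = Ω.indicator (fun x => (uk k x - u x) * divg ψ.1 x) x := by
        intro x; by_cases hx : x ∈ Ω <;> simp [Set.indicator, hx] <;> ring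
      simp only [hpt]
      rw [setIntegral_indicator hΩm, Set.inter_eq_self_of_subset_right hΩR]
    have hbound : ∀ k, ‖I k - J‖ ≤ (∫ x in Ω, |uk k x - u x|) * M := by
      intro k
      rw [hdiff k]
      calc ‖∫ x in Ω, (uk k x - u x) * divg ψ.1 x‖
          ≤ ∫ x in Ω, ‖(uk k x - u x) * divg ψ.1 x‖ := norm_integral_le_integral_norm _
        _ ≤ ∫ x in Ω, |uk k x - u x| * M := by
            refine integral_mono (hdiffInt k).norm ((((huk k).sub hu).abs).mul_const M) ?_
            intro x
            simp only [norm_mul, Real.norm_eq_abs]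
            exact mul_le_mul_of_nonneg_left (by simpa using hM x) (abs_nonneg _)
        _ = (∫ x in Ω, |uk k x - u x|) * M := integral_mul_const M _
    have htend : Tendsto I atTop (𝓝 J) := by
      have h0 : Tendsto (fun k => I k - J) atTop (𝓝 0) := by
        refine squeeze_zero_norm hbound ?_
        simpa using hconv.mul_const M
      have := h0.add (tendsto_const_nhds : Tendsto (fun _ : ℕ => J) atTop (𝓝 J))
      simpa using this
    have htend' : Tendsto (fun k => ENNReal.ofReal (I k) - C) atTop
        (𝓝 (ENNReal.ofReal J - C)) :=
      ((ENNReal.continuous_sub_right C).tendsto _).comp (ENNReal.tendsto_ofReal htend)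
    have hle : ∀ k, ENNReal.ofReal (I k) - C
        ≤ eTV (fun x => if x ∈ Ω then uk k x else gex x) (ball 0 R) - C := by
      intro k
      refine tsub_le_tsub_right ?_ C
      unfold eTV
      exact le_iSup (fun ψ' : {ψ' : Euc (d+1) → Euc (d+1) //
        IsTestVF (ball 0 R) ψ' ∧ ∀ x, ‖ψ' x‖ ≤ 1} =>
          ENNReal.ofReal (∫ x in ball (0:Euc (d+1)) R,
            (if x ∈ Ω then uk k x else gex x) * divg ψ'.1 x))
        ⟨ψ.1, ⟨⟨hψs, hψc, hψsupp⟩, hψ1⟩⟩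
    calc ENNReal.ofReal J - C
        = Filter.liminf (fun k => ENNReal.ofReal (I k) - C) atTop := htend'.liminf_eq.symm
      _ ≤ _ := Filter.liminf_le_liminf (Filter.Eventually.of_forall hle)
end
end
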